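/- arXiv:2304.00288 — 3 statements merged into one kernel-verified Lean document; each statement's English description precedes it below -/
import Mathlib

section
/- If f : L_n^r → L_n is Moisil representable (i.e., there is a term t in the signature (∨, ∧, N, 0, 1, Δ_1, ..., Δ_n) over variables x_1,...,x_r such that for every valuation φ of the variables in L_n, f(φ(x_1),...,φ(x_r)) equals the evaluation of t under φ), then for all a_1,...,a_r ∈ L_n, f(a_1,...,a_r) ∈ {0, 1, a_1, ..., a_r, 1-a_1, ..., 1-a_r}. -/
/-- The underlying set of the standard LM_n-algebra: {0, 1/n, ..., (n-1)/n, 1} ⊆ ℚ. -/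
def Ln (n : ℕ) : Set ℚ := {x | ∃ j : ℕ, j ≤ n ∧ x = (j : ℚ) / n}

/-- The Chrysippian endomorphism Δ_i on ℚ: on L_n, Δ_i(j/n) = 1 iff i + j ≥ n + 1. -/
def Delta (n i : ℕ) (x : ℚ) : ℚ := if (n : ℚ) + 1 ≤ (i : ℚ) + x * n then 1 else 0

/-- Terms in the signature (∨, ∧, N, 0, 1, Δ_1, ..., Δ_n) over variables x_1, ..., x_r. -/
inductive LMTerm (r : ℕ) where
  | var (i : Fin r)
  | zero
  | one
  | neg (t : LMTerm r)
  | sup (t u : LMTerm r)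
  | inf (t u : LMTerm r)
  | delta (i : ℕ) (t : LMTerm r)

/-- Evaluation of a term in the standard LM_n-algebra under a valuation φ. -/
def LMTerm.eval (n : ℕ) {r : ℕ} (φ : Fin r → ℚ) : LMTerm r → ℚ
  | .var i => φ i
  | .zero => 0
  | .one => 1
  | .neg t => 1 - t.eval n φ
  | .sup t u => max (t.eval n φ) (u.eval n φ)
  | .inf t u => min (t.eval n φ) (u.eval n φ)
  | .delta i t => Delta n i (t.eval n φ)

/-- A function is Moisil representable if some term evaluates to it under
every valuation into L_n. -/
def Representable (n r : ℕ) (f : (Fin r → ℚ) → ℚ) : Prop :=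
  ∃ t : LMTerm r, ∀ φ : Fin r → ℚ, (∀ i, φ i ∈ Ln n) → t.eval n φ = f φ

/-- The set {0, 1, a_1, ..., a_r, 1 - a_1, ..., 1 - a_r}. -/
def Mset (r : ℕ) (a : Fin r → ℚ) : Set ℚ :=
  {x | x = 0 ∨ x = 1 ∨ ∃ i : Fin r, x = a i ∨ x = 1 - a i}

/-! Every operation of the signature maps values in `{0, 1, a_i, 1 - a_i}` back into that set:
`max` and `min` return one of their arguments, `N` swaps `a_i` with `1 - a_i` and `0` with `1`,
and each `Δ_i` is two-valued. Hence, by induction on terms, every term evaluates there. -/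

lemma zero_mem_Mset {r : ℕ} (a : Fin r → ℚ) : (0 : ℚ) ∈ Mset r a := Or.inl rfl

lemma one_mem_Mset {r : ℕ} (a : Fin r → ℚ) : (1 : ℚ) ∈ Mset r a := Or.inr (Or.inl rfl)

lemma apply_mem_Mset {r : ℕ} (a : Fin r → ℚ) (i : Fin r) : a i ∈ Mset r a :=
  Or.inr (Or.inr ⟨i, Or.inl rfl⟩)

lemma one_sub_mem_Mset {r : ℕ} {a : Fin r → ℚ} {x : ℚ} (hx : x ∈ Mset r a) :
    1 - x ∈ Mset r a := by
  rcases hx with rfl | rfl | ⟨i, rfl | rfl⟩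
  · exact Or.inr (Or.inl (sub_zero 1))
  · exact Or.inl (sub_self 1)
  · exact Or.inr (Or.inr ⟨i, Or.inr rfl⟩)
  · exact Or.inr (Or.inr ⟨i, Or.inl (sub_sub_cancel 1 (a i))⟩)

lemma Delta_mem_Mset (n i : ℕ) {r : ℕ} (a : Fin r → ℚ) (x : ℚ) : Delta n i x ∈ Mset r a := by
  unfold Delta
  split
  · exact one_mem_Mset a
  · exact zero_mem_Mset a

lemma LMTerm.eval_mem_Mset (n : ℕ) {r : ℕ} (a : Fin r → ℚ) (t : LMTerm r) :
    t.eval n a ∈ Mset r a := by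
  induction t with
  | var i => exact apply_mem_Mset a i
  | zero => exact zero_mem_Mset a
  | one => exact one_mem_Mset a
  | neg t ih => exact one_sub_mem_Mset ih
  | sup t u iht ihu =>
    rcases max_choice (t.eval n a) (u.eval n a) with h | h
    · simpa only [LMTerm.eval, h] using iht
    · simpa only [LMTerm.eval, h] using ihu
  | inf t u iht ihu =>
    rcases min_choice (t.eval n a) (u.eval n a) with h | h
    · simpa only [LMTerm.eval, h] using iht
    · simpa only [LMTerm.eval, h] using ihu
  | delta i t _ => exact Delta_mem_Mset n i a _

theorem representable_range_general (n r : ℕ)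
    (f : (Fin r → ℚ) → ℚ) (hf : Representable n r f) :
    ∀ a : Fin r → ℚ, (∀ i, a i ∈ Ln n) → f a ∈ Mset r a := by
  obtain ⟨t, ht⟩ := hf
  intro a ha
  rw [← ht a ha]
  exact t.eval_mem_Mset n a

/-- If f is Moisil representable, then f(a_1,...,a_r) always lies in
{0, 1, a_1, ..., a_r, 1-a_1, ..., 1-a_r}. -/
theorem representable_range (n r : ℕ) (hn : 2 ≤ n) (hr : 1 ≤ r)
    (f : (Fin r → ℚ) → ℚ) (hf : Representable n r f) :
    ∀ a : Fin r → ℚ, (∀ i, a i ∈ Ln n) → f a ∈ Mset r a :=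
  representable_range_general n r f hf
end

section
/- If f : L_n^r → L_n satisfies f(a_1,...,a_r) ∈ {0, 1, a_1, ..., a_r, 1-a_1, ..., 1-a_r} for all a_1,...,a_r ∈ L_n, then f is Moisil representable: there is a term in the signature (∨, ∧, N, 0, 1, Δ_1, ..., Δ_n) over variables x_1,...,x_r whose evaluation under any valuation φ equals f(φ(x_1),...,φ(x_r)). -/
/-!
Every value of `f` on a point `a` of the grid `L_n^r` is the value at `a` of one of the terms
`0`, `1`, `x_i`, `N x_i`. The nuance `Δ_{n+1-j} x ∧ N Δ_{n-j} x` is the characteristic function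
of `x = j/n` on `L_n`, so the meet of the nuances of the coordinates of `a` is the characteristic
function of `{a}`. Since all values lie in `[0, 1]`, the join over all grid points `a` of
(characteristic function of `{a}`) ∧ (the term chosen for `a`) evaluates to `f`.
-/

open Set

def gridPoint (n : ℕ) {r : ℕ} (a : Fin r → Fin (n + 1)) : Fin r → ℚ :=
  fun i => (a i : ℚ) / n

lemma gridPoint_mem_Ln {n r : ℕ} (a : Fin r → Fin (n + 1)) (i : Fin r) :
    gridPoint n a i ∈ Ln n :=
  ⟨a i, Fin.is_le _, rfl⟩

lemma gridPoint_mem_Icc {n r : ℕ} (a : Fin r → Fin (n + 1)) (i : Fin r) :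
    gridPoint n a i ∈ Icc (0 : ℚ) 1 :=
  ⟨by unfold gridPoint; positivity,
    div_le_one_of_le₀ (by exact_mod_cast Fin.is_le (a i)) (Nat.cast_nonneg n)⟩

lemma exists_gridPoint_eq {n r : ℕ} {φ : Fin r → ℚ} (hφ : ∀ i, φ i ∈ Ln n) :
    ∃ a : Fin r → Fin (n + 1), gridPoint n a = φ := by
  choose k hk hφk using hφ
  exact ⟨fun i => ⟨k i, Nat.lt_succ_of_le (hk i)⟩, funext fun i => (hφk i).symm⟩

lemma Delta_natCast_div {n : ℕ} (hn : 0 < n) (i k : ℕ) :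
    Delta n i ((k : ℚ) / n) = if n + 1 ≤ i + k then 1 else 0 := by
  rw [Delta, div_mul_cancel₀ _ (by positivity)]
  norm_cast

namespace LMTerm

variable {n r : ℕ}

lemma eval_mem_Icc {φ : Fin r → ℚ} (hφ : ∀ i, φ i ∈ Icc (0 : ℚ) 1) :
    ∀ t : LMTerm r, t.eval n φ ∈ Icc (0 : ℚ) 1
  | var i => hφ i
  | zero => by norm_num [eval]
  | one => by norm_num [eval]
  | neg t => by
    have := eval_mem_Icc hφ t
    constructor <;> simp only [eval] <;> linarith [this.1, this.2]
  | sup t u => by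
    have ht := eval_mem_Icc hφ t
    have hu := eval_mem_Icc hφ u
    exact ⟨le_max_of_le_left ht.1, max_le ht.2 hu.2⟩
  | inf t u => by
    have ht := eval_mem_Icc hφ t
    have hu := eval_mem_Icc hφ u
    exact ⟨le_min ht.1 hu.1, min_le_of_left_le ht.2⟩
  | delta i t => by
    simp only [eval, Delta]
    split_ifs <;> norm_num

def listSup : List (LMTerm r) → LMTerm r
  | [] => zero
  | t :: l => sup t (listSup l)

def listInf : List (LMTerm r) → LMTerm r
  | [] => one
  | t :: l => inf t (listInf l)

variable {φ : Fin r → ℚ}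

lemma le_eval_listSup {t : LMTerm r} :
    ∀ {l : List (LMTerm r)}, t ∈ l → t.eval n φ ≤ (listSup l).eval n φ
  | _ :: _, .head _ => le_max_left _ _
  | _ :: _, .tail _ h => (le_eval_listSup h).trans (le_max_right _ _)

lemma eval_listSup_le {v : ℚ} (hv : 0 ≤ v) :
    ∀ {l : List (LMTerm r)}, (∀ t ∈ l, t.eval n φ ≤ v) → (listSup l).eval n φ ≤ v
  | [], _ => hv
  | t :: _, h => max_le (h t List.mem_cons_self)
      (eval_listSup_le hv fun u hu => h u (List.mem_cons_of_mem t hu))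

lemma eval_listInf_le {t : LMTerm r} :
    ∀ {l : List (LMTerm r)}, t ∈ l → (listInf l).eval n φ ≤ t.eval n φ
  | _ :: _, .head _ => min_le_left _ _
  | _ :: _, .tail _ h => (min_le_right _ _).trans (eval_listInf_le h)

lemma le_eval_listInf {v : ℚ} (hv : v ≤ 1) :
    ∀ {l : List (LMTerm r)}, (∀ t ∈ l, v ≤ t.eval n φ) → v ≤ (listInf l).eval n φ
  | [], _ => hv
  | t :: _, h => le_min (h t List.mem_cons_self)
      (le_eval_listInf hv fun u hu => h u (List.mem_cons_of_mem t hu))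

/-- The nuance `J_j(t)`. -/
def nuance (n j : ℕ) (t : LMTerm r) : LMTerm r :=
  inf (delta (n + 1 - j) t) (neg (delta (n - j) t))

lemma eval_nuance (hn : 0 < n) {j k : ℕ} (hj : j ≤ n) (hk : k ≤ n) {t : LMTerm r}
    (ht : t.eval n φ = k / n) : (t.nuance n j).eval n φ = if j = k then 1 else 0 := by
  simp only [nuance, eval, ht, Delta_natCast_div hn]
  split_ifs <;> first | omega | norm_num

def minterm (n : ℕ) (a : Fin r → Fin (n + 1)) : LMTerm r :=
  listInf (List.ofFn fun i => (var i).nuance n (a i))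

lemma eval_minterm (hn : 0 < n) (a b : Fin r → Fin (n + 1)) :
    (minterm n a).eval n (gridPoint n b) = if a = b then 1 else 0 := by
  have hJ (i : Fin r) :
      ((var i).nuance n (a i)).eval n (gridPoint n b) = if a i = b i then 1 else 0 := by
    rw [eval_nuance hn (Fin.is_le _) (Fin.is_le (b i)) rfl]
    simp only [Fin.val_inj]
  have hIcc := eval_mem_Icc (n := n) (gridPoint_mem_Icc b) (minterm n a)
  split_ifs with hab
  · subst hab
    refine le_antisymm hIcc.2 (le_eval_listInf le_rfl ?_)
    simp [List.mem_ofFn, hJ]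
  · obtain ⟨i, hi⟩ := Function.ne_iff.mp hab
    refine le_antisymm ?_ hIcc.1
    calc (minterm n a).eval n (gridPoint n b)
        ≤ ((var i).nuance n (a i)).eval n (gridPoint n b) :=
          eval_listInf_le (List.mem_ofFn.mpr ⟨i, rfl⟩)
      _ = 0 := by rw [hJ, if_neg hi]

noncomputable def caseSplit (n : ℕ) (s : (Fin r → Fin (n + 1)) → LMTerm r) : LMTerm r :=
  listSup (Finset.univ.toList.map fun a => inf (minterm n a) (s a))

lemma eval_caseSplit (hn : 0 < n) (s : (Fin r → Fin (n + 1)) → LMTerm r)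
    (b : Fin r → Fin (n + 1)) :
    (caseSplit n s).eval n (gridPoint n b) = (s b).eval n (gridPoint n b) := by
  have hIcc (a) := eval_mem_Icc (n := n) (gridPoint_mem_Icc b) (s a)
  have hcase (a) : (inf (minterm n a) (s a)).eval n (gridPoint n b)
      = if a = b then (s a).eval n (gridPoint n b) else 0 := by
    rw [eval, eval_minterm hn]
    split_ifs
    · exact min_eq_right (hIcc a).2
    · exact min_eq_left (hIcc a).1
  apply le_antisymm
  · refine eval_listSup_le (hIcc b).1 ?_
    simp only [List.mem_map, Finset.mem_toList, Finset.mem_univ, true_and]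
    rintro _ ⟨a, rfl⟩
    rw [hcase]
    split_ifs with hab
    · rw [hab]
    · exact (hIcc b).1
  · calc (s b).eval n (gridPoint n b) = (inf (minterm n b) (s b)).eval n (gridPoint n b) := by
          rw [hcase, if_pos rfl]
      _ ≤ (caseSplit n s).eval n (gridPoint n b) :=
          le_eval_listSup (List.mem_map_of_mem (Finset.mem_toList.mpr (Finset.mem_univ b)))

lemma exists_eval_eq_of_mem_Mset {x : ℚ} (hx : x ∈ Mset r φ) :
    ∃ t : LMTerm r, t.eval n φ = x := by
  rcases hx with rfl | rfl | ⟨i, rfl | rfl⟩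
  exacts [⟨zero, rfl⟩, ⟨one, rfl⟩, ⟨var i, rfl⟩, ⟨neg (var i), rfl⟩]

end LMTerm

theorem range_implies_representable_general (n r : ℕ) (hn : 2 ≤ n)
    (f : (Fin r → ℚ) → ℚ)
    (hf : ∀ a : Fin r → ℚ, (∀ i, a i ∈ Ln n) → f a ∈ Mset r a) :
    Representable n r f := by
  choose s hs using fun a => LMTerm.exists_eval_eq_of_mem_Mset (n := n)
    (hf (gridPoint n a) (gridPoint_mem_Ln a))
  refine ⟨LMTerm.caseSplit n s, fun φ hφ => ?_⟩
  obtain ⟨b, rfl⟩ := exists_gridPoint_eq hφ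
  rw [LMTerm.eval_caseSplit (by omega), hs]

/-- If f(a_1,...,a_r) ∈ {0, 1, a_1, ..., a_r, 1-a_1, ..., 1-a_r} for all inputs in L_n,
then f is Moisil representable. -/
theorem range_implies_representable (n r : ℕ) (hn : 2 ≤ n) (hr : 1 ≤ r)
    (f : (Fin r → ℚ) → ℚ)
    (hf : ∀ a : Fin r → ℚ, (∀ i, a i ∈ Ln n) → f a ∈ Mset r a) :
    Representable n r f :=
  range_implies_representable_general n r hn f hf
end

section
/- For n odd and k ∈ {1, ..., (n+1)/2}, the number of subalgebras of L_n with exactly 2k elements is the binomial coefficient C((n-1)/2, k-1). -/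
/-- A subalgebra of the standard LM_n-algebra: a subset of L_n containing 0 and 1 and
closed under max, min, x ↦ 1 - x and each Δ_i. -/
def IsSubalg (n : ℕ) (A : Set ℚ) : Prop :=
  A ⊆ Ln n ∧ (0 : ℚ) ∈ A ∧ (1 : ℚ) ∈ A ∧
  (∀ x ∈ A, 1 - x ∈ A) ∧
  (∀ x ∈ A, ∀ y ∈ A, max x y ∈ A ∧ min x y ∈ A) ∧
  (∀ i : ℕ, 1 ≤ i → i ≤ n → ∀ x ∈ A, Delta n i x ∈ A)

/-- The lower half {1/n, 2/n, ..., ((n-1)/2)/n} of L_n. -/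
def Hset (n : ℕ) : Set ℚ := {x | ∃ j : ℕ, 1 ≤ j ∧ j ≤ (n - 1) / 2 ∧ x = (j : ℚ) / n}

/-!
On the chain `L_n`, `max` and `min` return one of their arguments and every `Δ_i` takes only the
values `0` and `1`, so the subalgebras are exactly the subsets of `L_n` that contain `0` and `1`
and are closed under `x ↦ 1 - x`. For odd `n` this involution has no fixed point, and `L_n` is the
disjoint union of `{0, 1}`, the lower half `H = Hset n` and its mirror image. Hence a subalgebra
`A` is recovered from `B = A ∩ H` as `{0, 1} ∪ B ∪ (1 - B)`, which has `2 |B| + 2` elements, and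
subalgebras with `2k` elements correspond to the `(k - 1)`-subsets of `H`, a set of size
`(n - 1) / 2`.
-/

open Set

lemma isSubalg_iff {n : ℕ} {A : Set ℚ} :
    IsSubalg n A ↔ A ⊆ Ln n ∧ (0 : ℚ) ∈ A ∧ (1 : ℚ) ∈ A ∧ ∀ x ∈ A, 1 - x ∈ A := by
  refine ⟨fun ⟨hL, h0, h1, hneg, _⟩ => ⟨hL, h0, h1, hneg⟩,
    fun ⟨hL, h0, h1, hneg⟩ => ⟨hL, h0, h1, hneg, fun x hx y hy => ⟨?_, ?_⟩, ?_⟩⟩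
  · rcases max_choice x y with h | h <;> rwa [h]
  · rcases min_choice x y with h | h <;> rwa [h]
  · intro i _ _ x _
    unfold Delta
    split_ifs <;> assumption

lemma one_sub_div_natCast {n j : ℕ} (hn : 0 < n) (hj : j ≤ n) :
    1 - (j : ℚ) / n = ((n - j : ℕ) : ℚ) / n := by
  rw [Nat.cast_sub hj]
  field_simp

lemma zero_mem_Ln (n : ℕ) : (0 : ℚ) ∈ Ln n := ⟨0, n.zero_le, by simp⟩

lemma one_mem_Ln {n : ℕ} (hn : 0 < n) : (1 : ℚ) ∈ Ln n :=
  ⟨n, le_rfl, by field_simp⟩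

lemma one_sub_mem_Ln {n : ℕ} (hn : 0 < n) {x : ℚ} (hx : x ∈ Ln n) : 1 - x ∈ Ln n := by
  obtain ⟨j, hj, rfl⟩ := hx
  exact ⟨n - j, n.sub_le j, one_sub_div_natCast hn hj⟩

lemma Hset_eq_image (n : ℕ) : Hset n = (fun j : ℕ => (j : ℚ) / n) '' Icc 1 ((n - 1) / 2) := by
  ext x
  simp only [Hset, mem_ofPred_eq, mem_image, mem_Icc, and_assoc, eq_comm]

lemma finite_Hset (n : ℕ) : (Hset n).Finite := by
  rw [Hset_eq_image]
  exact (finite_Icc _ _).image _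

lemma ncard_Hset {n : ℕ} (hn : 0 < n) : (Hset n).ncard = (n - 1) / 2 := by
  have hinj : Function.Injective (fun j : ℕ => (j : ℚ) / n) := fun a b h => by
    have : (n : ℚ) ≠ 0 := by positivity
    exact_mod_cast (div_left_inj' this).1 h
  rw [Hset_eq_image, ncard_image_of_injective _ hinj, ncard_Icc_nat]
  omega

lemma Hset_subset_Ln (n : ℕ) : Hset n ⊆ Ln n := by
  rintro _ ⟨j, -, hj, rfl⟩
  exact ⟨j, by omega, rfl⟩

lemma Hset_subset_Ioo (n : ℕ) : Hset n ⊆ Ioo 0 (1 / 2) := by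
  rintro _ ⟨j, hj1, hj2, rfl⟩
  have hn : (0 : ℚ) < n := by norm_cast; omega
  have hjn : 2 * (j : ℚ) < n := by norm_cast; omega
  refine ⟨by positivity, ?_⟩
  rw [div_lt_iff₀ hn]
  linarith

lemma mem_Ln_cases {n : ℕ} (hodd : Odd n) {x : ℚ} (hx : x ∈ Ln n) :
    x = 0 ∨ x = 1 ∨ x ∈ Hset n ∨ 1 - x ∈ Hset n := by
  obtain ⟨m, rfl⟩ := hodd
  obtain ⟨j, hj, rfl⟩ := hx
  have hn : 0 < 2 * m + 1 := by omega
  rcases Nat.eq_zero_or_pos j with rfl | hj0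
  · simp
  by_cases hjm : j ≤ m
  · exact Or.inr (Or.inr (Or.inl ⟨j, hj0, by omega, rfl⟩))
  by_cases hjn : j = 2 * m + 1
  · subst hjn
    exact Or.inr (Or.inl (div_self (by positivity)))
  exact Or.inr (Or.inr (Or.inr ⟨2 * m + 1 - j, by omega, by omega, one_sub_div_natCast hn hj⟩))

def subalgGen (B : Set ℚ) : Set ℚ := insert 0 (insert 1 (B ∪ (1 - ·) '' B))

lemma mem_subalgGen {B : Set ℚ} {x : ℚ} :
    x ∈ subalgGen B ↔ x = 0 ∨ x = 1 ∨ x ∈ B ∨ 1 - x ∈ B := by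
  have : x ∈ (1 - ·) '' B ↔ 1 - x ∈ B :=
    ⟨fun ⟨y, hy, hyx⟩ => by rwa [← hyx, sub_sub_cancel], fun h => ⟨1 - x, h, sub_sub_cancel 1 x⟩⟩
  simp only [subalgGen, mem_insert_iff, mem_union, this]

lemma isSubalg_subalgGen {n : ℕ} (hn : 0 < n) {B : Set ℚ} (hB : B ⊆ Ln n) :
    IsSubalg n (subalgGen B) := by
  refine isSubalg_iff.2 ⟨fun x hx => ?_, by simp [mem_subalgGen], by simp [mem_subalgGen],
    fun x hx => ?_⟩
  · rcases mem_subalgGen.1 hx with rfl | rfl | hx | hx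
    · exact zero_mem_Ln n
    · exact one_mem_Ln hn
    · exact hB hx
    · simpa using one_sub_mem_Ln hn (hB hx)
  · rw [mem_subalgGen]
    rcases mem_subalgGen.1 hx with rfl | rfl | hx | hx <;> simp [hx]

lemma subalgGen_inter_Hset {n : ℕ} (hodd : Odd n) {A : Set ℚ} (hA : IsSubalg n A) :
    subalgGen (A ∩ Hset n) = A := by
  obtain ⟨hL, h0, h1, hneg⟩ := isSubalg_iff.1 hA
  ext x
  rw [mem_subalgGen]
  constructor
  · rintro (rfl | rfl | hx | hx)
    · exact h0
    · exact h1
    · exact hx.1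
    · simpa using hneg _ hx.1
  · intro hx
    rcases mem_Ln_cases hodd (hL hx) with h | h | h | h
    · exact Or.inl h
    · exact Or.inr (Or.inl h)
    · exact Or.inr (Or.inr (Or.inl ⟨hx, h⟩))
    · exact Or.inr (Or.inr (Or.inr ⟨hneg x hx, h⟩))

lemma subalgGen_inter_Hset_of_subset {n : ℕ} {B : Set ℚ} (hB : B ⊆ Hset n) :
    subalgGen B ∩ Hset n = B := by
  ext x
  rw [mem_inter_iff, mem_subalgGen]
  refine ⟨fun ⟨hx, hH⟩ => ?_, fun hx => ⟨Or.inr (Or.inr (Or.inl hx)), hB hx⟩⟩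
  have hxH := Hset_subset_Ioo n hH
  rcases hx with rfl | rfl | hx | hx
  · exact absurd hxH.1 (lt_irrefl 0)
  · norm_num at hxH
  · exact hx
  · have := Hset_subset_Ioo n (hB hx)
    linarith [this.2, hxH.2]

lemma injOn_subalgGen (n : ℕ) : InjOn subalgGen (𝒫 Hset n) := fun B hB B' hB' h => by
  rw [← subalgGen_inter_Hset_of_subset hB, h, subalgGen_inter_Hset_of_subset hB']

lemma ncard_subalgGen {n : ℕ} {B : Set ℚ} (hB : B ⊆ Hset n) :
    (subalgGen B).ncard = 2 * B.ncard + 2 := by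
  have hfin : B.Finite := (finite_Hset n).subset hB
  have hlow : ∀ x ∈ B, 0 < x ∧ x < 1 / 2 := fun x hx => Hset_subset_Ioo n (hB hx)
  have hdisj : Disjoint B ((1 - ·) '' B) := by
    rw [disjoint_left]
    rintro x hx ⟨y, hy, rfl⟩
    linarith [(hlow _ hx).2, (hlow y hy).2]
  have hmid : ∀ x ∈ B ∪ (1 - ·) '' B, 0 < x ∧ x < 1 := by
    rintro x (hx | ⟨y, hy, rfl⟩)
    · exact ⟨(hlow x hx).1, by linarith [(hlow x hx).2]⟩
    · exact ⟨by linarith [(hlow y hy).2], by linarith [(hlow y hy).1]⟩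
  have h1 : (1 : ℚ) ∉ B ∪ (1 - ·) '' B := fun h => (hmid 1 h).2.false
  have h0 : (0 : ℚ) ∉ insert 1 (B ∪ (1 - ·) '' B) := by
    rintro (h | h)
    · exact zero_ne_one h
    · exact (hmid 0 h).1.false
  rw [subalgGen, ncard_insert_of_notMem h0 ((hfin.union (hfin.image _)).insert 1),
    ncard_insert_of_notMem h1 (hfin.union (hfin.image _)), ncard_union_eq hdisj hfin (hfin.image _),
    ncard_image_of_injective _ sub_right_injective]
  ring

theorem count_subalgebras_general (n k : ℕ) (hodd : Odd n) (hk1 : 1 ≤ k) :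
    {A : Set ℚ | IsSubalg n A ∧ A.ncard = 2 * k}.ncard =
      Nat.choose ((n - 1) / 2) (k - 1) := by
  have htarget : {A : Set ℚ | IsSubalg n A ∧ A.ncard = 2 * k} =
      subalgGen '' {B ⊆ Hset n | B.ncard = k - 1} := by
    ext A
    constructor
    · rintro ⟨hA, hcard⟩
      have hgen := ncard_subalgGen (inter_subset_right (s := A) (t := Hset n))
      rw [subalgGen_inter_Hset hodd hA] at hgen
      exact ⟨A ∩ Hset n, ⟨inter_subset_right, by omega⟩, subalgGen_inter_Hset hodd hA⟩
    · rintro ⟨B, ⟨hB, hcard⟩, rfl⟩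
      exact ⟨isSubalg_subalgGen hodd.pos (hB.trans (Hset_subset_Ln n)),
        by rw [ncard_subalgGen hB]; omega⟩
  rw [htarget, ((injOn_subalgGen n).mono fun _ hB => hB.1).ncard_image,
    ncard_powerset_ncard (finite_Hset n), ncard_Hset hodd.pos]

/-- For odd n and 1 ≤ k ≤ (n+1)/2, the number of subalgebras of L_n with exactly
2k elements is the binomial coefficient C((n-1)/2, k-1). -/
theorem count_subalgebras (n k : ℕ) (hn : 3 ≤ n) (hodd : Odd n)
    (hk1 : 1 ≤ k) (hk2 : k ≤ (n + 1) / 2) :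
    {A : Set ℚ | IsSubalg n A ∧ A.ncard = 2 * k}.ncard =
      Nat.choose ((n - 1) / 2) (k - 1) :=
  count_subalgebras_general n k hodd hk1
end
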